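/- Let Φ be a reduced irreducible root system in ℝ^d with d ≥ 2, and let L ⊆ ℂ^d be a 2-dimensional ℂ-linear subspace such that L ⊄ ker θ_ℂ for every θ ∈ Φ. Then for every θ ∈ Φ the subspace l_θ := ker θ_ℂ ∩ L is 1-dimensional, and the number s of distinct lines occurring among {l_θ : θ ∈ Φ} satisfies 3 ≤ s ≤ (1/2)·#Φ. -/

import Mathlib

noncomputable section

/-- The standard inner product on `ℝ^d`. -/
def dotR {d : ℕ} (x y : Fin d → ℝ) : ℝ := ∑ i, x i * y i

/-- `Φ` is a root system in `ℝ^d`: a finite set of nonzero vectors spanning `ℝ^d`,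
closed under the reflections `s_α`, with integral Cartan numbers. -/
def IsRootSystem {d : ℕ} (Φ : Finset (Fin d → ℝ)) : Prop :=
  (∀ α ∈ Φ, α ≠ 0) ∧
  Submodule.span ℝ (Φ : Set (Fin d → ℝ)) = ⊤ ∧
  (∀ α ∈ Φ, ∀ β ∈ Φ, β - (2 * dotR β α / dotR α α) • α ∈ Φ) ∧
  (∀ α ∈ Φ, ∀ β ∈ Φ, ∃ n : ℤ, 2 * dotR β α / dotR α α = (n : ℝ))

/-- `Φ` is reduced: the only multiples of a root `α` in `Φ` are `±α`. -/
def IsReducedRS {d : ℕ} (Φ : Finset (Fin d → ℝ)) : Prop :=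
  ∀ α ∈ Φ, ∀ t : ℝ, t • α ∈ Φ → t = 1 ∨ t = -1

/-- `Φ` is irreducible: it is not the disjoint union of two nonempty mutually
orthogonal subsets. -/
def IsIrreducibleRS {d : ℕ} (Φ : Finset (Fin d → ℝ)) : Prop :=
  ∀ A B : Set (Fin d → ℝ), (Φ : Set (Fin d → ℝ)) = A ∪ B → Disjoint A B →
    (∀ a ∈ A, ∀ b ∈ B, dotR a b = 0) → A = ∅ ∨ B = ∅

/-- The complexification `θ_ℂ : ℂ^d → ℂ` of the linear functional `z ↦ Σ θᵢ zᵢ`. -/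
def thetaC {d : ℕ} (θ : Fin d → ℝ) (z : Fin d → ℂ) : ℂ := ∑ i, (θ i : ℂ) * z i

/-- The kernel of `θ_ℂ`, as a complex subspace of `ℂ^d`. -/
def kerC {d : ℕ} (θ : Fin d → ℝ) : Submodule ℂ (Fin d → ℂ) where
  carrier := {z | thetaC θ z = 0}
  add_mem' := by
    intro a b ha hb
    simp only [Set.mem_setOf_eq, thetaC] at *
    simp [Pi.add_apply, mul_add, Finset.sum_add_distrib, ha, hb]
  zero_mem' := by simp [thetaC]
  smul_mem' := by
    intro c z hz
    simp only [Set.mem_setOf_eq, thetaC] at *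
    have h : ∑ i, (θ i : ℂ) * (c • z) i = c * ∑ i, (θ i : ℂ) * z i := by
      rw [Finset.mul_sum]
      exact Finset.sum_congr rfl (fun i _ => by simp [Pi.smul_apply, smul_eq_mul]; ring)
    rw [h, hz, mul_zero]

/-!
Every `l_θ` is a line because `θ_ℂ` restricts to a nonzero functional on the plane `L`, and
`l_θ = l_{-θ}` gives the upper bound. For the lower bound: if all roots defined the same line,
a nonzero vector of it would be killed by every root, impossible as `Φ` spans. If `α, β` define
different lines and `⟨β, α⟩ ≠ 0`, then the reflection `s_α β = β - cα` (`c ≠ 0`) defines a third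
line, because on a spanning vector of `l_α` it agrees with `β` and on one of `l_β` with `-cα`.
So with only two lines the roots would split into two mutually orthogonal classes,
contradicting irreducibility.
-/

open Module Matrix

lemma Module.Dual.finrank_ker_inf_add_one {K V : Type*} [Field K] [AddCommGroup V] [Module K V]
    (f : Module.Dual K V) {L : Submodule K V} [FiniteDimensional K L]
    (hL : ¬ L ≤ LinearMap.ker f) :
    finrank K ↥(LinearMap.ker f ⊓ L) + 1 = finrank K L := by
  have hf : f.domRestrict L ≠ 0 := fun h =>
    hL fun v hv => by simpa using LinearMap.congr_fun h ⟨v, hv⟩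
  rw [← Module.Dual.finrank_ker_add_one_of_ne_zero hf, LinearMap.ker_domRestrict,
    ← Submodule.finrank_map_subtype_eq, Submodule.map_comap_subtype, inf_comm]

lemma Submodule.eq_of_finrank_eq_one_of_mem {K V : Type*} [DivisionRing K] [AddCommGroup V]
    [Module K V] {v : V} (hv : v ≠ 0) {l₁ l₂ : Submodule K V}
    (h₁ : finrank K l₁ = 1) (h₂ : finrank K l₂ = 1) (hv₁ : v ∈ l₁) (hv₂ : v ∈ l₂) :
    l₁ = l₂ := by
  have h_span {l : Submodule K V} (h : finrank K l = 1) (hvl : v ∈ l) : K ∙ v = l := by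
    have : FiniteDimensional K l := Module.finite_of_finrank_eq_succ h
    exact Submodule.eq_of_le_of_finrank_eq ((Submodule.span_singleton_le_iff_mem _ _).mpr hvl)
      (by rw [finrank_span_singleton hv, h])
  rw [← h_span h₁ hv₁, h_span h₂ hv₂]

lemma Finset.two_mul_card_image_le_card {α β : Type*} [DecidableEq β] {f : α → β}
    {s : Finset α} (g : α → α) (hg : ∀ a ∈ s, g a ∈ s ∧ g a ≠ a ∧ f (g a) = f a) :
    2 * (s.image f).card ≤ s.card := by
  refine mul_card_image_le_card s 2 fun b hb => ?_
  obtain ⟨a, ha, rfl⟩ := mem_image.mp hb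
  obtain ⟨hga, hgne, hfg⟩ := hg a ha
  exact one_lt_card.mpr ⟨a, by simp [ha], g a, by simp [hga, hfg], hgne.symm⟩

lemma Matrix.eq_zero_of_forall_dotProduct_eq_zero {R n : Type*} [CommRing R] [Fintype n]
    [DecidableEq n] {s : Set (n → R)} (hs : Submodule.span R s = ⊤) {a : n → R}
    (h : ∀ θ ∈ s, a ⬝ᵥ θ = 0) : a = 0 := by
  have : dotProductEquiv R n a = 0 := LinearMap.ext_on hs h
  exact dotProduct_eq_zero a fun w => LinearMap.congr_fun this w

section RootLines

variable {d : ℕ}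

def thetaDual (θ : Fin d → ℝ) : Module.Dual ℂ (Fin d → ℂ) :=
  dotProductEquiv ℂ (Fin d) fun i => (θ i : ℂ)

lemma kerC_eq_ker_thetaDual (θ : Fin d → ℝ) : kerC θ = LinearMap.ker (thetaDual θ) := rfl

lemma mem_kerC {θ : Fin d → ℝ} {z : Fin d → ℂ} : z ∈ kerC θ ↔ thetaC θ z = 0 := Iff.rfl

lemma thetaC_sub_smul (β α : Fin d → ℝ) (c : ℝ) (z : Fin d → ℂ) :
    thetaC (β - c • α) z = thetaC β z - c * thetaC α z := by
  simp only [thetaC, Finset.mul_sum, ← Finset.sum_sub_distrib, Pi.sub_apply, Pi.smul_apply,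
    smul_eq_mul, Complex.ofReal_sub, Complex.ofReal_mul]
  exact Finset.sum_congr rfl fun i _ => by ring

lemma kerC_neg (θ : Fin d → ℝ) : kerC (-θ) = kerC θ := by
  ext z
  simp [mem_kerC, thetaC]

lemma re_thetaC (θ : Fin d → ℝ) (z : Fin d → ℂ) :
    (thetaC θ z).re = θ ⬝ᵥ fun i => (z i).re := by
  simp [thetaC, dotProduct, Complex.re_sum]

lemma im_thetaC (θ : Fin d → ℝ) (z : Fin d → ℂ) :
    (thetaC θ z).im = θ ⬝ᵥ fun i => (z i).im := by
  simp [thetaC, dotProduct, Complex.im_sum]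

lemma eq_zero_of_forall_thetaC_eq_zero {Φ : Set (Fin d → ℝ)} (hspan : Submodule.span ℝ Φ = ⊤)
    {z : Fin d → ℂ} (hz : ∀ θ ∈ Φ, thetaC θ z = 0) : z = 0 := by
  have hre : (fun i => (z i).re) = 0 := eq_zero_of_forall_dotProduct_eq_zero hspan
    fun θ hθ => by rw [dotProduct_comm, ← re_thetaC, hz θ hθ, Complex.zero_re]
  have him : (fun i => (z i).im) = 0 := eq_zero_of_forall_dotProduct_eq_zero hspan
    fun θ hθ => by rw [dotProduct_comm, ← im_thetaC, hz θ hθ, Complex.zero_im]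
  funext i
  exact Complex.ext (congrFun hre i) (congrFun him i)

variable {L : Submodule ℂ (Fin d → ℂ)}

lemma finrank_kerC_inf_eq_one (hL : finrank ℂ L = 2) {θ : Fin d → ℝ} (hθ : ¬ L ≤ kerC θ) :
    finrank ℂ ↥(kerC θ ⊓ L) = 1 := by
  have : FiniteDimensional ℂ L := Module.finite_of_finrank_eq_succ hL
  have := (thetaDual θ).finrank_ker_inf_add_one hθ
  rw [← kerC_eq_ker_thetaDual] at this
  omega

lemma exists_ne_zero_mem_kerC_inf (hL : finrank ℂ L = 2) {θ : Fin d → ℝ} (hθ : ¬ L ≤ kerC θ) :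
    ∃ v ∈ kerC θ ⊓ L, v ≠ 0 :=
  Submodule.exists_mem_ne_zero_of_ne_bot fun h => by
    have := finrank_kerC_inf_eq_one hL hθ
    rw [h, finrank_bot] at this
    exact zero_ne_one this

lemma kerC_inf_eq_iff_thetaC_eq_zero (hL : finrank ℂ L = 2) {α θ : Fin d → ℝ}
    (hα : ¬ L ≤ kerC α) (hθ : ¬ L ≤ kerC θ) {v : Fin d → ℂ} (hv : v ∈ kerC α ⊓ L)
    (hv0 : v ≠ 0) : kerC θ ⊓ L = kerC α ⊓ L ↔ thetaC θ v = 0 := by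
  refine ⟨fun h => (h ▸ hv).1, fun h => ?_⟩
  exact Submodule.eq_of_finrank_eq_one_of_mem hv0 (finrank_kerC_inf_eq_one hL hθ)
    (finrank_kerC_inf_eq_one hL hα) ⟨h, hv.2⟩ hv

lemma kerC_sub_smul_inf_ne (hL : finrank ℂ L = 2) {α β : Fin d → ℝ} {c : ℝ} (hc : c ≠ 0)
    (hα : ¬ L ≤ kerC α) (hβ : ¬ L ≤ kerC β) (hγ : ¬ L ≤ kerC (β - c • α))
    (hne : kerC β ⊓ L ≠ kerC α ⊓ L) :
    kerC (β - c • α) ⊓ L ≠ kerC α ⊓ L ∧ kerC (β - c • α) ⊓ L ≠ kerC β ⊓ L := by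
  obtain ⟨v, hv, hv0⟩ := exists_ne_zero_mem_kerC_inf hL hα
  obtain ⟨w, hw, hw0⟩ := exists_ne_zero_mem_kerC_inf hL hβ
  have hβv : thetaC β v ≠ 0 := fun h =>
    hne ((kerC_inf_eq_iff_thetaC_eq_zero hL hα hβ hv hv0).mpr h)
  have hαw : thetaC α w ≠ 0 := fun h =>
    hne ((kerC_inf_eq_iff_thetaC_eq_zero hL hβ hα hw hw0).mpr h).symm
  rw [ne_eq, kerC_inf_eq_iff_thetaC_eq_zero hL hα hγ hv hv0, ne_eq,
    kerC_inf_eq_iff_thetaC_eq_zero hL hβ hγ hw hw0, thetaC_sub_smul, thetaC_sub_smul,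
    mem_kerC.mp hv.1, mem_kerC.mp hw.1]
  simpa [hc] using ⟨hβv, hαw⟩

end RootLines

namespace IsRootSystem

variable {d : ℕ} {Φ : Finset (Fin d → ℝ)}

lemma dotR_self_ne_zero (hRS : IsRootSystem Φ) {θ : Fin d → ℝ} (hθ : θ ∈ Φ) :
    dotR θ θ ≠ 0 :=
  fun h => hRS.1 θ hθ (dotProduct_self_eq_zero.mp h)

lemma neg_mem (hRS : IsRootSystem Φ) {θ : Fin d → ℝ} (hθ : θ ∈ Φ) : -θ ∈ Φ := by
  have h := hRS.2.2.1 θ hθ θ hθ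
  rwa [mul_div_assoc, div_self (hRS.dotR_self_ne_zero hθ), mul_one, two_smul,
    sub_add_cancel_left] at h

lemma nonempty (hRS : IsRootSystem Φ) (hd : 0 < d) : Φ.Nonempty := by
  have : Nonempty (Fin d) := Fin.pos_iff_nonempty.mp hd
  rw [Finset.nonempty_iff_ne_empty]
  rintro rfl
  simpa using hRS.2.1

variable {L : Submodule ℂ (Fin d → ℂ)}

lemma exists_kerC_inf_ne (hRS : IsRootSystem Φ) (hL : finrank ℂ L = 2)
    (hLk : ∀ θ ∈ Φ, ¬ L ≤ kerC θ) {α : Fin d → ℝ} (hα : α ∈ Φ) :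
    ∃ β ∈ Φ, kerC β ⊓ L ≠ kerC α ⊓ L := by
  obtain ⟨v, hv, hv0⟩ := exists_ne_zero_mem_kerC_inf hL (hLk α hα)
  by_contra! h
  exact hv0 <| eq_zero_of_forall_thetaC_eq_zero hRS.2.1 fun θ hθ =>
    (kerC_inf_eq_iff_thetaC_eq_zero hL (hLk α hα) (hLk θ hθ) hv hv0).mp (h θ hθ)

lemma exists_kerC_inf_ne_ne (hRS : IsRootSystem Φ) (hirr : IsIrreducibleRS Φ)
    (hL : finrank ℂ L = 2) (hLk : ∀ θ ∈ Φ, ¬ L ≤ kerC θ) {α β : Fin d → ℝ} (hα : α ∈ Φ)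
    (hβ : β ∈ Φ) (hne : kerC β ⊓ L ≠ kerC α ⊓ L) :
    ∃ γ ∈ Φ, kerC γ ⊓ L ≠ kerC α ⊓ L ∧ kerC γ ⊓ L ≠ kerC β ⊓ L := by
  by_contra! h
  set A : Set (Fin d → ℝ) := {θ | θ ∈ Φ ∧ kerC θ ⊓ L = kerC α ⊓ L}
  set B : Set (Fin d → ℝ) := {θ | θ ∈ Φ ∧ kerC θ ⊓ L ≠ kerC α ⊓ L}
  have hcover : (Φ : Set (Fin d → ℝ)) = A ∪ B := by
    ext θ
    simp only [Finset.mem_coe, Set.mem_union, Set.mem_ofPred_eq, A, B]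
    tauto
  have hdisj : Disjoint A B := Set.disjoint_left.mpr fun θ hA hB => hB.2 hA.2
  -- A root `b ∈ B` not orthogonal to `a ∈ A` would make `s_b a` define a third line.
  have horth : ∀ a ∈ A, ∀ b ∈ B, dotR a b = 0 := by
    rintro a ⟨ha, haα⟩ b ⟨hb, hbα⟩
    by_contra hab
    have hc : 2 * dotR a b / dotR b b ≠ 0 :=
      div_ne_zero (mul_ne_zero two_ne_zero hab) (hRS.dotR_self_ne_zero hb)
    have hγ := hRS.2.2.1 b hb a ha
    obtain ⟨hγb, hγa⟩ := kerC_sub_smul_inf_ne hL hc (hLk b hb) (hLk a ha) (hLk _ hγ)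
      (by rw [haα, h b hb hbα]; exact hne.symm)
    rw [h b hb hbα] at hγb
    rw [haα] at hγa
    exact hγb (h _ hγ hγa)
  rcases hirr A B hcover hdisj horth with hA | hB
  · exact hA.subset ⟨hα, rfl⟩
  · exact hB.subset ⟨hβ, hne⟩

end IsRootSystem

theorem stmt0 {d : ℕ} (hd : 2 ≤ d) (Φ : Finset (Fin d → ℝ))
    (hRS : IsRootSystem Φ) (hirr : IsIrreducibleRS Φ)
    (L : Submodule ℂ (Fin d → ℂ)) (hL : Module.finrank ℂ L = 2)
    (hLk : ∀ θ ∈ Φ, ¬ L ≤ kerC θ) :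
    (∀ θ ∈ Φ, Module.finrank ℂ ↥(kerC θ ⊓ L) = 1) ∧
    3 ≤ {l : Submodule ℂ (Fin d → ℂ) | ∃ θ ∈ Φ, l = kerC θ ⊓ L}.ncard ∧
    2 * {l : Submodule ℂ (Fin d → ℂ) | ∃ θ ∈ Φ, l = kerC θ ⊓ L}.ncard ≤ Φ.card := by
  classical
  have hcard : {l : Submodule ℂ (Fin d → ℂ) | ∃ θ ∈ Φ, l = kerC θ ⊓ L}.ncard
      = (Φ.image fun θ => kerC θ ⊓ L).card := by
    rw [← Set.ncard_coe_finset, Finset.coe_image]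
    simp only [Set.image, Finset.mem_coe, eq_comm]
  refine ⟨fun θ hθ => finrank_kerC_inf_eq_one hL (hLk θ hθ), ?_, ?_⟩
  · obtain ⟨α, hα⟩ := hRS.nonempty (by omega)
    obtain ⟨β, hβ, hβα⟩ := hRS.exists_kerC_inf_ne hL hLk hα
    obtain ⟨γ, hγ, hγα, hγβ⟩ := hRS.exists_kerC_inf_ne_ne hirr hL hLk hα hβ hβα
    rw [hcard, Nat.succ_le_iff, Finset.two_lt_card_iff]
    exact ⟨_, _, _, Finset.mem_image_of_mem _ hα, Finset.mem_image_of_mem _ hβ,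
      Finset.mem_image_of_mem _ hγ, hβα.symm, hγα.symm, hγβ.symm⟩
  · rw [hcard]
    refine Finset.two_mul_card_image_le_card Neg.neg fun θ hθ => ⟨hRS.neg_mem hθ, ?_, ?_⟩
    · exact neg_ne_self.mpr (hRS.1 θ hθ)
    · simp only [kerC_neg]

end
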